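/- For the set {|ψ_{00}⟩, |ψ_{11}⟩, |ψ_{31}⟩, |ψ_{32}⟩} of generalized Bell states in ℂ^4 ⊗ ℂ^4 and any positive semidefinite Hermitian 4×4 matrix E with Tr(E) > 0: if ⟨ψ_i|(E ⊗ I)|ψ_j⟩ = 0 for all distinct pairs i ≠ j, and the average Bob-side post-measurement state ρ_B = (1/(4·Tr(E)/4)) Σ_{i=1}^{4} (1/4)·Tr_A((√E ⊗ I)|ψ_i⟩⟨ψ_i|(√E ⊗ I)) normalized to trace one has von Neumann entropy 2 bits, then E is a positive scalar multiple of the identity. -/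

import Mathlib

open Matrix
open scoped Kronecker ComplexOrder

/-- The generalized Bell state `|ψ_{nm}⟩ = (1/√d) ∑_j e^{2πijn/d} |j⟩ ⊗ |j ⊕_d m⟩`. -/
noncomputable def bell (d : ℕ) (n m : Fin d) : Fin d × Fin d → ℂ :=
  fun p => (1 / Real.sqrt d) *
    Complex.exp (2 * Real.pi * Complex.I * (p.1 : ℕ) * (n : ℕ) / d) *
    (if p.2 = p.1 + m then 1 else 0)

/-- The rank-one projection `|ψ⟩⟨ψ|`. -/
noncomputable def outer {ι : Type*} (ψ : ι → ℂ) : Matrix ι ι ℂ :=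
  Matrix.of fun p q => ψ p * star (ψ q)

/-- Partial trace over the first (Alice's) tensor factor. -/
noncomputable def trA {d : ℕ} (ρ : Matrix (Fin d × Fin d) (Fin d × Fin d) ℂ) :
    Matrix (Fin d) (Fin d) ℂ :=
  Matrix.of fun i j => ∑ k : Fin d, ρ (k, i) (k, j)

/-- The indices of the four Bell states `ψ_{00}, ψ_{11}, ψ_{31}, ψ_{32}`. -/
def bellIdx : Fin 4 → Fin 4 × Fin 4 := ![(0, 0), (1, 1), (3, 1), (3, 2)]

/-- The square root of a positive semidefinite matrix (the former `Matrix.PosSemidef.sqrt`). -/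
noncomputable def psdSqrt {E : Matrix (Fin 4) (Fin 4) ℂ} (hE : E.PosSemidef) :
    Matrix (Fin 4) (Fin 4) ℂ :=
  hE.1.eigenvectorUnitary.1 * diagonal ((↑) ∘ (√·) ∘ hE.1.eigenvalues) *
    (star hE.1.eigenvectorUnitary : Matrix (Fin 4) (Fin 4) ℂ)

/-- The average Bob-side post-measurement state, normalized to trace one:
`ρ_B = (Tr E)⁻¹ ∑ᵢ Tr_A((√E ⊗ I)|ψᵢ⟩⟨ψᵢ|(√E ⊗ I))`. -/
noncomputable def rhoB (E : Matrix (Fin 4) (Fin 4) ℂ) (hE : E.PosSemidef) :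
    Matrix (Fin 4) (Fin 4) ℂ :=
  (E.trace)⁻¹ • ∑ i : Fin 4,
    trA ((psdSqrt hE ⊗ₖ (1 : Matrix (Fin 4) (Fin 4) ℂ)) *
      outer (bell 4 (bellIdx i).1 (bellIdx i).2) *
      (psdSqrt hE ⊗ₖ (1 : Matrix (Fin 4) (Fin 4) ℂ)))

/-- The von Neumann entropy (in bits) of a Hermitian matrix. -/
noncomputable def vnEntropy {d : ℕ} {M : Matrix (Fin d) (Fin d) ℂ}
    (h : M.IsHermitian) : ℝ :=
  -∑ i, h.eigenvalues i * Real.logb 2 (h.eigenvalues i)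

/-! An entropy of `2 = log₂ 4` bits forces `ρ_B = I/4`, by the equality case of Gibbs'
inequality. Since `√E` enters `ρ_B` only through `√E * √E = E`, the entries of `ρ_B` are explicit
linear forms in the entries of `E`, and `ρ_B = I/4` becomes a linear system for `E`. Together
with the orthogonality relations (also linear in `E`) and `Eᴴ = E`, it kills every off-diagonal
entry and makes the diagonal constant. -/

open InformationTheory

theorem eq_inv_card_of_entropy_eq_logb_card {ι : Type*} [Fintype ι] {p : ι → ℝ}
    (h0 : ∀ i, 0 ≤ p i) (h1 : ∑ i, p i = 1)
    (hH : -∑ i, p i * Real.logb 2 (p i) = Real.logb 2 (Fintype.card ι)) (i : ι) :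
    p i = (Fintype.card ι : ℝ)⁻¹ := by
  set n : ℝ := (Fintype.card ι : ℝ)
  have hn : 0 < n := Nat.cast_pos.2 (Fintype.card_pos_iff.2 ⟨i⟩)
  have hlog : ∑ j, p j * Real.log (p j) = -Real.log n := by
    have h2 : Real.log 2 ≠ 0 := by positivity
    simp only [Real.logb, mul_div_assoc', ← Finset.sum_div] at hH
    field_simp at hH
    linarith
  have hmul (j : ι) :
      n * p j * Real.log (n * p j) = n * (p j * Real.log n + p j * Real.log (p j)) := by
    rcases (h0 j).eq_or_lt with h | h
    · simp [← h]
    · rw [Real.log_mul hn.ne' h.ne']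
      ring
  -- Gibbs' inequality term by term: `klFun ≥ 0`, with equality only at `1`.
  have hsum : ∑ j, klFun (n * p j) = 0 := by
    simp only [klFun, hmul, Finset.sum_add_distrib, Finset.sum_sub_distrib, ← Finset.mul_sum,
      ← Finset.sum_mul, hlog, h1, Finset.sum_const, Finset.card_univ, nsmul_eq_mul]
    ring
  have hi := (Finset.sum_eq_zero_iff_of_nonneg fun j _ =>
    klFun_nonneg (mul_nonneg hn.le (h0 j))).1 hsum i (Finset.mem_univ i)
  rw [klFun_eq_zero_iff (mul_nonneg hn.le (h0 i))] at hi
  field_simp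
  linarith

theorem Matrix.IsHermitian.eq_smul_one_of_eigenvalues_eq {n : Type*} [Fintype n] [DecidableEq n]
    {M : Matrix n n ℂ} (hM : M.IsHermitian) {c : ℝ} (hc : ∀ i, hM.eigenvalues i = c) :
    M = (c : ℂ) • 1 := by
  rw [hM.spectral_theorem, Unitary.conjStarAlgAut_apply]
  have : diagonal (RCLike.ofReal ∘ hM.eigenvalues) = (c : ℂ) • (1 : Matrix n n ℂ) := by
    ext i j
    by_cases hij : i = j <;> simp [hij, hc]
  rw [this, Matrix.mul_smul, Matrix.mul_one, Matrix.smul_mul, ← Unitary.coe_star,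
    Unitary.coe_mul_star_self]

theorem Matrix.PosSemidef.eq_inv_card_smul_one_of_vnEntropy_eq {d : ℕ}
    {M : Matrix (Fin d) (Fin d) ℂ} (hM : M.PosSemidef) (htr : M.trace = 1) (hH : M.IsHermitian)
    (hent : vnEntropy hH = Real.logb 2 d) : M = (((d : ℝ)⁻¹ : ℝ) : ℂ) • 1 := by
  have hsum : ∑ i, hH.eigenvalues i = 1 := by
    have := hH.trace_eq_sum_eigenvalues
    rw [htr] at this
    simpa using congrArg Complex.re this.symm
  refine hH.eq_smul_one_of_eigenvalues_eq fun i => ?_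
  simpa using eq_inv_card_of_entropy_eq_logb_card (p := hH.eigenvalues)
    (fun i => hM.eigenvalues_nonneg i) hsum (by rw [Fintype.card_fin]; exact hent) i

theorem Matrix.trace_fin_four {R : Type*} [AddCommMonoid R] (A : Matrix (Fin 4) (Fin 4) R) :
    A.trace = A 0 0 + A 1 1 + A 2 2 + A 3 3 := by
  simp [Matrix.trace, Fin.sum_univ_four]

theorem psdSqrt_eq_cfc {E : Matrix (Fin 4) (Fin 4) ℂ} (hE : E.PosSemidef) :
    psdSqrt hE = cfc Real.sqrt E := by
  rw [hE.1.cfc_eq, IsHermitian.cfc, Unitary.conjStarAlgAut_apply]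
  rfl

theorem psdSqrt_isHermitian {E : Matrix (Fin 4) (Fin 4) ℂ} (hE : E.PosSemidef) :
    (psdSqrt hE).IsHermitian :=
  psdSqrt_eq_cfc hE ▸ cfc_predicate Real.sqrt E

theorem psdSqrt_mul_self {E : Matrix (Fin 4) (Fin 4) ℂ} (hE : E.PosSemidef) :
    psdSqrt hE * psdSqrt hE = E := by
  rw [psdSqrt_eq_cfc, ← cfc_mul Real.sqrt Real.sqrt E]
  conv_rhs => rw [← cfc_id' ℝ E hE.1.isSelfAdjoint]
  refine cfc_congr fun x hx => ?_
  rw [hE.1.spectrum_real_eq_range_eigenvalues] at hx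
  obtain ⟨i, rfl⟩ := hx
  exact Real.mul_self_sqrt (hE.eigenvalues_nonneg i)

theorem outer_posSemidef {ι : Type*} [Fintype ι] (ψ : ι → ℂ) : (outer ψ).PosSemidef :=
  posSemidef_vecMulVec_self_star ψ

theorem trA_eq_sum_submatrix {d : ℕ} (ρ : Matrix (Fin d × Fin d) (Fin d × Fin d) ℂ) :
    trA ρ = ∑ k, ρ.submatrix (Prod.mk k) (Prod.mk k) := by
  ext i j
  simp [trA, Matrix.sum_apply]

theorem trA_posSemidef {d : ℕ} {ρ : Matrix (Fin d × Fin d) (Fin d × Fin d) ℂ}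
    (hρ : ρ.PosSemidef) : (trA ρ).PosSemidef :=
  trA_eq_sum_submatrix ρ ▸ posSemidef_sum _ fun _ _ => hρ.submatrix _

theorem trA_kronecker_one_mul_outer_mul_apply {d : ℕ} (S : Matrix (Fin d) (Fin d) ℂ)
    (ψ : Fin d × Fin d → ℂ) (i j : Fin d) :
    trA ((S ⊗ₖ (1 : Matrix (Fin d) (Fin d) ℂ)) * outer ψ * (S ⊗ₖ 1)) i j
      = ∑ a, ∑ b, ψ (a, i) * star (ψ (b, j)) * (S * S) b a := by
  simp only [trA, Matrix.of_apply, Matrix.mul_apply, outer, kroneckerMap_apply,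
    Matrix.one_apply, Fintype.sum_prod_type, mul_ite, ite_mul, mul_zero, zero_mul,
    mul_one, Finset.sum_ite_eq, Finset.sum_ite_eq', Finset.mem_univ, if_true,
    Finset.sum_mul, Finset.mul_sum]
  rw [Finset.sum_comm]
  conv_rhs => rw [Finset.sum_comm]
  refine Finset.sum_congr rfl fun b _ => ?_
  rw [Finset.sum_comm]
  exact Finset.sum_congr rfl fun a _ => Finset.sum_congr rfl fun k _ => by ring

theorem rhoB_posSemidef {E : Matrix (Fin 4) (Fin 4) ℂ} (hE : E.PosSemidef) (htr : 0 < E.trace) :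
    (rhoB E hE).PosSemidef := by
  have hS : (psdSqrt hE ⊗ₖ (1 : Matrix (Fin 4) (Fin 4) ℂ))ᴴ = psdSqrt hE ⊗ₖ 1 := by
    rw [conjTranspose_kronecker, (psdSqrt_isHermitian hE).eq, conjTranspose_one]
  refine (posSemidef_sum _ fun i _ => trA_posSemidef ?_).smul (inv_nonneg.2 htr.le)
  have := (outer_posSemidef (bell 4 (bellIdx i).1 (bellIdx i).2)).mul_mul_conjTranspose_same
    (psdSqrt hE ⊗ₖ (1 : Matrix (Fin 4) (Fin 4) ℂ))
  rwa [hS] at this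

section ShiftVec

variable {d : ℕ} [NeZero d]

def shiftVec (m : Fin d) (f : Fin d → ℂ) : Fin d × Fin d → ℂ :=
  fun p => if p.2 = p.1 + m then f p.1 else 0

theorem star_shiftVec_dotProduct_kronecker_one_mulVec (E : Matrix (Fin d) (Fin d) ℂ)
    (m m' : Fin d) (f g : Fin d → ℂ) :
    star (shiftVec m f) ⬝ᵥ (E ⊗ₖ (1 : Matrix (Fin d) (Fin d) ℂ)) *ᵥ shiftVec m' g
      = ∑ a, star (f a) * E a (a + m - m') * g (a + m - m') := by
  have hsolve (b c : Fin d) : (b = c + m') = (c = b - m') :=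
    propext (eq_comm.trans eq_sub_iff_add_eq.symm)
  simp only [shiftVec, dotProduct, mulVec, Fintype.sum_prod_type, kroneckerMap_apply, one_apply,
    Pi.star_apply, apply_ite star, star_zero, hsolve, mul_ite, ite_mul, mul_one, mul_zero,
    zero_mul, Finset.sum_ite_eq', Finset.mem_univ, if_true]
  refine Finset.sum_congr rfl fun a _ => ?_
  rw [Finset.sum_comm]
  simp only [Finset.sum_ite_eq', Finset.sum_ite_eq, Finset.mem_univ, if_true, mul_assoc]

theorem trA_kronecker_one_mul_outer_shiftVec_mul_apply (S : Matrix (Fin d) (Fin d) ℂ)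
    (m : Fin d) (f : Fin d → ℂ) (i j : Fin d) :
    trA ((S ⊗ₖ (1 : Matrix (Fin d) (Fin d) ℂ)) * outer (shiftVec m f) * (S ⊗ₖ 1)) i j
      = f (i - m) * star (f (j - m)) * (S * S) (j - m) (i - m) := by
  have hsolve (b c : Fin d) : (b = c + m) = (c = b - m) :=
    propext (eq_comm.trans eq_sub_iff_add_eq.symm)
  simp only [trA_kronecker_one_mul_outer_mul_apply, shiftVec, apply_ite star, star_zero, hsolve,
    mul_ite, ite_mul, mul_zero, zero_mul, Finset.sum_ite_eq', Finset.mem_univ, if_true]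

end ShiftVec

open Complex

-- `e^{2πi k/4} = I ^ k` depends only on `k mod 4`, so the phase can be indexed by `a * n : Fin 4`.
theorem bell_four (n m : Fin 4) :
    bell 4 n m = shiftVec m fun a => I ^ ((a * n : Fin 4) : ℕ) / 2 := by
  ext ⟨a, b⟩
  have hsqrt : Real.sqrt (4 : ℕ) = 2 := by
    rw [show ((4 : ℕ) : ℝ) = 2 ^ 2 by norm_num, Real.sqrt_sq zero_le_two]
  have hexp :
      exp (2 * Real.pi * I * (a : ℕ) * (n : ℕ) / (4 : ℕ)) = I ^ ((a * n : Fin 4) : ℕ) := by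
    have : 2 * Real.pi * I * (a : ℕ) * (n : ℕ) / (4 : ℕ)
        = ((a * n : ℕ) : ℂ) * (Real.pi / 2 * I) := by
      push_cast
      ring
    rw [this, exp_nat_mul, exp_pi_div_two_mul_I, Fin.val_mul, ← I_pow_eq_pow_mod]
  simp only [bell, shiftVec, hsqrt, hexp]
  split_ifs <;> simp [div_eq_inv_mul]

theorem star_bell_dotProduct_kronecker_one_mulVec_bell (E : Matrix (Fin 4) (Fin 4) ℂ)
    (n m n' m' : Fin 4) :
    star (bell 4 n m) ⬝ᵥ (E ⊗ₖ (1 : Matrix (Fin 4) (Fin 4) ℂ)) *ᵥ bell 4 n' m'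
      = ∑ a, star (I ^ ((a * n : Fin 4) : ℕ) / 2) * E a (a + m - m') *
          (I ^ (((a + m - m') * n' : Fin 4) : ℕ) / 2) := by
  rw [bell_four, bell_four, star_shiftVec_dotProduct_kronecker_one_mulVec]

theorem rhoB_apply {E : Matrix (Fin 4) (Fin 4) ℂ} (hE : E.PosSemidef) (i j : Fin 4) :
    rhoB E hE i j = (E.trace)⁻¹ * ∑ s,
      I ^ (((i - (bellIdx s).2) * (bellIdx s).1 : Fin 4) : ℕ) / 2 *
        star (I ^ (((j - (bellIdx s).2) * (bellIdx s).1 : Fin 4) : ℕ) / 2) *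
        E (j - (bellIdx s).2) (i - (bellIdx s).2) := by
  simp only [rhoB, Matrix.smul_apply, Matrix.sum_apply, smul_eq_mul, bell_four,
    trA_kronecker_one_mul_outer_shiftVec_mul_apply, psdSqrt_mul_self]

theorem trace_rhoB {E : Matrix (Fin 4) (Fin 4) ℂ} (hE : E.PosSemidef) (htr : E.trace ≠ 0) :
    (rhoB E hE).trace = 1 := by
  rw [trace_fin_four, rhoB_apply, rhoB_apply, rhoB_apply, rhoB_apply, ← mul_add, ← mul_add,
    ← mul_add, inv_mul_eq_one₀ htr, trace_fin_four]
  simp only [Fin.sum_univ_four, bellIdx, Matrix.cons_val_zero, Matrix.cons_val_one,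
    Matrix.cons_val_two, Matrix.cons_val_three, Matrix.head_cons, Matrix.tail_cons, Fin.reduceSub,
    Fin.reduceMul, Fin.isValue, Fin.coe_ofNat_eq_mod, Nat.reduceMod, pow_zero, pow_one, I_sq,
    I_pow_three, star_div₀, Complex.star_def, map_one, map_neg, conj_I, conj_ofNat,
    div_mul_div_comm, mul_neg, neg_mul, neg_neg, I_mul_I]
  ring

def BellOrthogonal (E : Matrix (Fin 4) (Fin 4) ℂ) : Prop :=
  ∀ i j : Fin 4, i ≠ j →
    star (bell 4 (bellIdx i).1 (bellIdx i).2) ⬝ᵥ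
      ((E ⊗ₖ (1 : Matrix (Fin 4) (Fin 4) ℂ)).mulVec (bell 4 (bellIdx j).1 (bellIdx j).2)) = 0

theorem BellOrthogonal.entry_relations {E : Matrix (Fin 4) (Fin 4) ℂ} (hOP : BellOrthogonal E) :
    E 1 0 = 0 ∧ E 3 2 = 0 ∧ E 0 3 = 0 ∧ E 2 1 = 0 ∧ E 0 2 = E 2 0 ∧ E 1 3 = E 3 1 ∧
      E 0 0 + E 2 2 = E 1 1 + E 3 3 := by
  have h01 := hOP 0 1 (by decide)
  have h02 := hOP 0 2 (by decide)
  have h03 := hOP 0 3 (by decide)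
  have h30 := hOP 3 0 (by decide)
  have h12 := hOP 1 2 (by decide)
  have h13 := hOP 1 3 (by decide)
  have h23 := hOP 2 3 (by decide)
  simp only [star_bell_dotProduct_kronecker_one_mulVec_bell, Fin.sum_univ_four, bellIdx,
    Matrix.cons_val_zero, Matrix.cons_val_one, Matrix.cons_val_two, Matrix.cons_val_three,
    Matrix.head_cons, Matrix.tail_cons, Fin.reduceSub, Fin.reduceMul, Fin.reduceAdd, Fin.isValue,
    Fin.coe_ofNat_eq_mod, Nat.reduceMod, pow_zero, pow_one, I_sq, I_pow_three, star_div₀,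
    Complex.star_def, map_one, map_neg, conj_I, conj_ofNat] at h01 h02 h03 h30 h12 h13 h23
  refine ⟨?_, ?_, ?_, ?_, ?_, ?_, ?_⟩
  · linear_combination h01 + h02 - I * (h23 - h13) + (E 1 0 + E 3 2) / 2 * I_sq
  · linear_combination -(h01 + h02) - I * (h23 - h13) + (E 1 0 + E 3 2) / 2 * I_sq
  · linear_combination -I * (h02 - h01 + h13 + h23) + E 0 3 * I_sq
  · linear_combination -I * (h13 + h23 - h02 + h01) + E 2 1 * I_sq
  · linear_combination 2 * (h30 - h03)
  · linear_combination -2 * I * (h03 + h30) + (E 1 3 - E 3 1) * I_sq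
  · linear_combination 4 * h12 - (E 1 1 + E 3 3) * I_sq

theorem entry_relations_of_rhoB_eq {E : Matrix (Fin 4) (Fin 4) ℂ} (hE : E.PosSemidef)
    (htr : E.trace ≠ 0) (hρ : rhoB E hE = (4 : ℂ)⁻¹ • 1) :
    E 0 0 + 2 * E 3 3 + E 2 2 = E.trace ∧ E 1 1 + 2 * E 0 0 + E 3 3 = E.trace ∧
      E 2 0 - 2 * E 1 3 - E 0 2 = 0 ∧ E 3 1 - 2 * E 2 0 - E 1 3 = 0 := by
  have h00 := congrFun (congrFun hρ 0) 0
  have h11 := congrFun (congrFun hρ 1) 1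
  have h02 := congrFun (congrFun hρ 0) 2
  have h13 := congrFun (congrFun hρ 1) 3
  simp only [rhoB_apply, Matrix.smul_apply, Matrix.one_apply, Fin.sum_univ_four, bellIdx,
    Matrix.cons_val_zero, Matrix.cons_val_one, Matrix.cons_val_two, Matrix.cons_val_three,
    Matrix.head_cons, Matrix.tail_cons, Fin.reduceSub, Fin.reduceMul, Fin.isValue,
    Fin.coe_ofNat_eq_mod, Nat.reduceMod, pow_zero, pow_one, I_sq, I_pow_three, star_div₀,
    Complex.star_def, map_one, map_neg, conj_I, conj_ofNat, inv_mul_eq_iff_eq_mul₀ htr,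
    Fin.reduceEq, if_true, if_false, smul_eq_mul, div_mul_div_comm, mul_neg, neg_mul, neg_neg,
    I_mul_I] at h00 h11 h02 h13
  refine ⟨?_, ?_, ?_, ?_⟩
  · linear_combination 4 * h00
  · linear_combination 4 * h11
  · linear_combination 4 * h02
  · linear_combination 4 * h13

theorem BellOrthogonal.eq_smul_one_of_rhoB_eq {E : Matrix (Fin 4) (Fin 4) ℂ}
    (hOP : BellOrthogonal E) (hE : E.PosSemidef) (htr : E.trace ≠ 0)
    (hρ : rhoB E hE = (4 : ℂ)⁻¹ • 1) :
    E = (E.trace / 4) • 1 := by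
  obtain ⟨e10, e32, e03, e21, s02, s13, hdiag⟩ := hOP.entry_relations
  obtain ⟨hρ0, hρ1, hρ02, hρ13⟩ := entry_relations_of_rhoB_eq hE htr hρ
  have e13 : E 1 3 = 0 := by linear_combination -(hρ02 + s02) / 2
  have e20 : E 2 0 = 0 := by linear_combination -(hρ13 + s13) / 2
  have hstar (i j : Fin 4) (h : E j i = 0) : E i j = 0 := by rw [← hE.1.apply, h, star_zero]
  have htrace := trace_fin_four E
  have e33 : E 3 3 = E 1 1 := by linear_combination hρ0 + htrace
  have e22 : E 2 2 = E 0 0 := by linear_combination -(hρ1 + htrace)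
  have e11 : E 1 1 = E 0 0 := by linear_combination (-hdiag + e22 - e33) / 2
  have e00 : E 0 0 = E.trace / 4 := by rw [htrace, e33, e22, e11]; ring
  ext i j
  fin_cases i <;> fin_cases j <;>
    simp [e00, e11, e22, e33, e10, e32, e03, e21, e13, e20, hstar 0 1 e10,
      hstar 2 3 e32, hstar 3 0 e03, hstar 1 2 e21, hstar 3 1 e13, hstar 0 2 e20]

/-- If a PSD effect `E` with positive trace preserves the orthogonality of the Bell
states `ψ_{00}, ψ_{11}, ψ_{31}, ψ_{32}`, and the normalized average Bob-side
post-measurement state has von Neumann entropy 2 bits, then `E` is a positive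
scalar multiple of the identity. -/
theorem entropy_condition_forces_trivial (E : Matrix (Fin 4) (Fin 4) ℂ)
    (hE : E.PosSemidef) (htr : 0 < E.trace)
    (hOP : ∀ i j : Fin 4, i ≠ j →
      star (bell 4 (bellIdx i).1 (bellIdx i).2) ⬝ᵥ
        ((E ⊗ₖ (1 : Matrix (Fin 4) (Fin 4) ℂ)).mulVec
          (bell 4 (bellIdx j).1 (bellIdx j).2)) = 0)
    (hherm : (rhoB E hE).IsHermitian)
    (hent : vnEntropy hherm = 2) :
    ∃ t : ℝ, 0 < t ∧ E = (t : ℂ) • (1 : Matrix (Fin 4) (Fin 4) ℂ) := by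
  have hlog : (2 : ℝ) = Real.logb 2 (4 : ℕ) := by
    rw [show ((4 : ℕ) : ℝ) = 2 ^ 2 by norm_num, Real.logb_pow, Real.logb_self_eq_one one_lt_two]
    norm_num
  have hρ : rhoB E hE = (4 : ℂ)⁻¹ • 1 := by
    simpa using (rhoB_posSemidef hE htr).eq_inv_card_smul_one_of_vnEntropy_eq
      (trace_rhoB hE htr.ne') hherm (hent.trans hlog)
  obtain ⟨t, ht, htE⟩ := RCLike.pos_iff_exists_ofReal.1 htr
  refine ⟨t / 4, by positivity, ?_⟩
  rw [BellOrthogonal.eq_smul_one_of_rhoB_eq hOP hE htr.ne' hρ, ← htE, Complex.ofReal_div]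
  rfl
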